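/- arXiv:2209.03771 — 2 statements merged into one kernel-verified Lean document; each statement's English description precedes it below -/
import Mathlib

section
/- (Single-batch unbiasedness) Let Z be a nonempty finite set, T a nonempty subset of Z, s : T → ℝ a score function, and m ≥ 1. For x ∈ Z^m, let N(x) be the number of indices i with x(i) ∈ T, and define A(x) = (1/N(x)) · Σ_{i : x(i) ∈ T} s(x(i)) if N(x) > 0 and A(x) = 0 otherwise. If x is drawn uniformly at random from Z^m and P₁ = 1 − ((|Z| − |T|)/|Z|)^m, then 𝔼[A(x)] = P₁ · s_T, where s_T = (1/|T|) Σ_{t ∈ T} s(t). -/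
/-
Write `A(x) = ∑_{t ∈ T} s t · c_t(x) / N(x)`, where `c_t(x)` counts the coordinates of `x`
equal to `t`. A swap of two points of `T` acts on `Z^m` preserving `N`, so the total weight
`W_t = ∑_x c_t(x) / N(x)` does not depend on `t ∈ T`. Since `∑_{t ∈ T} c_t = N`, the sum
`∑_{t ∈ T} W_t` counts the tuples with `N(x) > 0`, i.e. it is `|Z|^m - (|Z| - |T|)^m`; hence
`W_t = (|Z|^m - (|Z| - |T|)^m) / |T|` and `∑_x A(x) = (∑_{t ∈ T} s t) · W_t`.
-/

open Finset

/-- The number of coordinates of the tuple `x : Z^m` that lie in `T`. -/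
def hitCount {Z : Type*} [DecidableEq Z] (T : Finset Z) {m : ℕ} (x : Fin m → Z) : ℕ :=
  (Finset.univ.filter fun i => x i ∈ T).card

/-- `A(x)`: the average of the score `s` over the coordinates of `x` lying in `T`
if at least one coordinate lies in `T`, and `0` otherwise. -/
noncomputable def batchAvg {Z : Type*} [DecidableEq Z] (T : Finset Z) (s : T → ℝ)
    {m : ℕ} (x : Fin m → Z) : ℝ :=
  if h : 0 < hitCount T x then
    (∑ i ∈ (Finset.univ.filter fun i => x i ∈ T).attach,
        s ⟨x i.1, (Finset.mem_filter.mp i.2).2⟩) / (hitCount T x : ℝ)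
  else 0

section

variable {Z : Type*} [DecidableEq Z] (T : Finset Z) {m : ℕ}

def coordCount (t : Z) (x : Fin m → Z) : ℕ :=
  #{i | x i = t}

theorem sum_hits_eq_sum_mul_coordCount (f : Z → ℝ) (x : Fin m → Z) :
    ∑ i with x i ∈ T, f (x i) = ∑ t ∈ T, f t * coordCount t x := by
  rw [← sum_fiberwise_of_maps_to' (g := x) (t := T) (fun i hi => (mem_filter.1 hi).2)]
  refine sum_congr rfl fun t ht => ?_
  rw [sum_const, nsmul_eq_mul, mul_comm, coordCount, filter_filter]
  congr 3
  ext i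
  simp only [mem_filter, mem_univ, true_and, and_iff_right_iff_imp]
  rintro rfl
  exact ht

theorem sum_coordCount_eq_hitCount (x : Fin m → Z) :
    ∑ t ∈ T, (coordCount t x : ℝ) = hitCount T x := by
  simpa [hitCount] using (sum_hits_eq_sum_mul_coordCount T (fun _ => 1) x).symm

theorem batchAvg_eq_sum_mul_coordCount_div (s : T → ℝ) (f : Z → ℝ)
    (hf : ∀ t : T, f t = s t) (x : Fin m → Z) :
    batchAvg T s x = ∑ t ∈ T, f t * (coordCount t x / hitCount T x) := by
  simp only [← mul_div_assoc, ← sum_div, ← sum_hits_eq_sum_mul_coordCount, batchAvg]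
  split_ifs with h
  · rw [← sum_attach _ fun i => f (x i)]
    exact congrArg (· / _) (sum_congr rfl fun i _ => (hf _).symm)
  · simp [Nat.eq_zero_of_not_pos h]

theorem sum_coordCount_div_hitCount (x : Fin m → Z) :
    ∑ t ∈ T, (coordCount t x : ℝ) / hitCount T x = if 0 < hitCount T x then 1 else 0 := by
  rw [← sum_div, sum_coordCount_eq_hitCount]
  split_ifs with h
  · exact div_self (Nat.cast_ne_zero.2 h.ne')
  · simp [Nat.eq_zero_of_not_pos h]

theorem swap_apply_mem_iff {t t' : Z} (ht : t ∈ T) (ht' : t' ∈ T) (z : Z) :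
    Equiv.swap t t' z ∈ T ↔ z ∈ T := by
  rw [Equiv.swap_apply_def]
  split_ifs with h h' <;> simp [*]

variable [Fintype Z]

theorem card_not_pos_hitCount : #{x : Fin m → Z | ¬0 < hitCount T x} = #Tᶜ ^ m := by
  rw [← Fintype.card_piFinset_const]
  congr 1
  ext x
  simp [hitCount, filter_eq_empty_iff]

theorem sum_sum_coordCount_div_hitCount :
    ∑ x : Fin m → Z, ∑ t ∈ T, (coordCount t x : ℝ) / hitCount T x
      = (Fintype.card Z : ℝ) ^ m - ((Fintype.card Z : ℝ) - #T) ^ m := by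
  have hsplit := card_filter_add_card_filter_not (s := (univ : Finset (Fin m → Z)))
    (fun x => 0 < hitCount T x)
  rw [card_not_pos_hitCount, card_univ, Fintype.card_fun, Fintype.card_fin, card_compl] at hsplit
  simp_rw [sum_coordCount_div_hitCount, sum_boole]
  rw [← Nat.cast_sub (card_le_univ T), eq_sub_iff_add_eq]
  exact_mod_cast hsplit

theorem sum_coordCount_div_hitCount_perm (σ : Equiv.Perm Z) (hσ : ∀ z, σ z ∈ T ↔ z ∈ T)
    (t : Z) :
    ∑ x : Fin m → Z, (coordCount t x : ℝ) / hitCount T x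
      = ∑ x : Fin m → Z, (coordCount (σ t) x : ℝ) / hitCount T x := by
  refine Fintype.sum_bijective (σ ∘ ·) σ.bijective.comp_left _ _ fun x => ?_
  have hcount : coordCount (σ t) (σ ∘ x) = coordCount t x := by
    simp [coordCount, σ.injective.eq_iff]
  have hhit : hitCount T (σ ∘ x) = hitCount T x := by
    simp [hitCount, hσ]
  rw [hcount, hhit]

theorem sum_coordCount_div_hitCount_of_mem {t : Z} (ht : t ∈ T) :
    ∑ x : Fin m → Z, (coordCount t x : ℝ) / hitCount T x
      = ((Fintype.card Z : ℝ) ^ m - ((Fintype.card Z : ℝ) - #T) ^ m) / #T := by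
  rw [eq_div_iff (Nat.cast_ne_zero.2 (card_ne_zero_of_mem ht)), mul_comm,
    ← sum_sum_coordCount_div_hitCount, sum_comm, ← nsmul_eq_mul, ← sum_const]
  refine sum_congr rfl fun t' ht' => ?_
  rw [sum_coordCount_div_hitCount_perm T _ (swap_apply_mem_iff T ht ht') t, Equiv.swap_apply_left]

theorem sum_batchAvg (s : T → ℝ) :
    ∑ x : Fin m → Z, batchAvg T s x
      = (∑ t ∈ T.attach, s t)
        * (((Fintype.card Z : ℝ) ^ m - ((Fintype.card Z : ℝ) - #T) ^ m) / #T) := by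
  set f : Z → ℝ := fun z => if h : z ∈ T then s ⟨z, h⟩ else 0
  have hf : ∀ t : T, f t = s t := fun t => dif_pos t.2
  simp_rw [batchAvg_eq_sum_mul_coordCount_div T s f hf, ← hf, sum_attach T f]
  rw [sum_comm, sum_mul]
  refine sum_congr rfl fun t ht => ?_
  rw [← mul_sum, sum_coordCount_div_hitCount_of_mem T ht]

end

theorem single_batch_unbiasedness_general
    {Z : Type*} [Fintype Z] [DecidableEq Z] [Nonempty Z]
    (T : Finset Z) (s : T → ℝ) (m : ℕ) :
    (∑ x : Fin m → Z, batchAvg T s x) / (Fintype.card (Fin m → Z) : ℝ)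
      = (1 - (((Fintype.card Z : ℝ) - (T.card : ℝ)) / (Fintype.card Z : ℝ)) ^ m)
        * ((∑ t ∈ T.attach, s t) / (T.card : ℝ)) := by
  have hZ : (Fintype.card Z : ℝ) ^ m ≠ 0 :=
    pow_ne_zero _ (Nat.cast_ne_zero.2 Fintype.card_ne_zero)
  rw [sum_batchAvg, Fintype.card_fun, Fintype.card_fin, Nat.cast_pow, div_pow,
    one_sub_div hZ]
  ring

/-- **Single-batch unbiasedness.** For a nonempty finite set `Z`, a nonempty
`T ⊆ Z`, a score `s : T → ℝ` and `m ≥ 1`, the expectation over a uniform `x ∈ Z^m` of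
`A(x)` equals `P₁ · s_T` where `P₁ = 1 - ((|Z| - |T|)/|Z|)^m` and
`s_T = (1/|T|) Σ_{t ∈ T} s t`. -/
theorem single_batch_unbiasedness
    {Z : Type*} [Fintype Z] [DecidableEq Z] [Nonempty Z]
    (T : Finset Z) (hT : T.Nonempty) (s : T → ℝ) (m : ℕ) (hm : 1 ≤ m) :
    (∑ x : Fin m → Z, batchAvg T s x) / (Fintype.card (Fin m → Z) : ℝ)
      = (1 - (((Fintype.card Z : ℝ) - (T.card : ℝ)) / (Fintype.card Z : ℝ)) ^ m)
        * ((∑ t ∈ T.attach, s t) / (T.card : ℝ)) :=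
  single_batch_unbiasedness_general T s m
end

section
/- (Unbiased estimator theorem) Let Z be a nonempty finite set, T a nonempty subset of Z, s : T → ℝ a score function, m ≥ 1 and K ≥ 1. Let M_1, …, M_K be independent uniform random elements of Z^m (K samples of m elements of Z drawn uniformly with replacement). For each k define avg(M_k^T) as the average of s over the coordinates of M_k that lie in T if at least one coordinate lies in T, and 0 otherwise; let K̄ be the number of indices k ≤ K such that M_k has at least one coordinate in T, and set â = (1/K̄) Σ_{k=1}^K avg(M_k^T) when K̄ ≥ 1. Then 𝔼[â · 1{K̄ ≥ 1}] = ℙ(K̄ ≥ 1) · s_T, where s_T = (1/|T|) Σ_{t ∈ T} s(t); equivalently, the conditional expectation of â given {K̄ ≥ 1} equals s_T, so â is an unbiased estimator of s_T. -/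
set_option maxHeartbeats 1000000


open Finset

/-- `K̄`: the number of draws among `M_1, …, M_K` containing at least one element of `T`. -/
def hitDraws {Z : Type*} [DecidableEq Z] (T : Finset Z) {m K : ℕ}
    (M : Fin K → Fin m → Z) : ℕ :=
  (Finset.univ.filter fun k => 1 ≤ hitCount T (M k)).card

/-- Score extended by 0 outside `T`. -/
noncomputable def score {Z : Type*} [DecidableEq Z] (T : Finset Z) (s : T → ℝ) (z : Z) : ℝ :=
  if h : z ∈ T then s ⟨z, h⟩ else 0

lemma batchAvg_eq {Z : Type*} [DecidableEq Z] (T : Finset Z) (s : T → ℝ) {m : ℕ}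
    (x : Fin m → Z) :
    batchAvg T s x = (∑ i, score T s (x i)) / (hitCount T x : ℝ) := by
  have hsum : (∑ i, score T s (x i)) =
      ∑ i ∈ (Finset.univ.filter fun i => x i ∈ T).attach,
        s ⟨x i.1, (Finset.mem_filter.mp i.2).2⟩ := by
    rw [show (∑ i ∈ (Finset.univ.filter fun i => x i ∈ T).attach,
        s ⟨x i.1, (Finset.mem_filter.mp i.2).2⟩)
        = ∑ i ∈ (Finset.univ.filter fun i => x i ∈ T), score T s (x i) by
      rw [← Finset.sum_attach (Finset.univ.filter fun i => x i ∈ T)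
        (fun i => score T s (x i))]
      apply Finset.sum_congr rfl
      intro i _
      have hi := (Finset.mem_filter.mp i.2).2
      simp [score, hi]]
    rw [Finset.sum_filter]
    apply Finset.sum_congr rfl
    intro i _
    by_cases hi : x i ∈ T <;> simp [score, hi]
  unfold batchAvg
  split_ifs with h
  · rw [hsum]
  · have h0 : hitCount T x = 0 := Nat.eq_zero_of_not_pos h
    have hz : ∀ i, score T s (x i) = 0 := by
      intro i
      have : x i ∉ T := by
        intro hmem
        exact h (Finset.card_pos.mpr ⟨i, Finset.mem_filter.mpr ⟨Finset.mem_univ i, hmem⟩⟩)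
      simp [score, this]
    simp [hz]

/-- Extend a permutation of `T` to a permutation of `Z` fixing the complement. -/
def extPerm {Z : Type*} [DecidableEq Z] (T : Finset Z) (σ : Equiv.Perm {z // z ∈ T}) :
    Equiv.Perm Z :=
  σ.extendDomain (Equiv.refl _)

lemma extPerm_apply_mem {Z : Type*} [DecidableEq Z] (T : Finset Z)
    (σ : Equiv.Perm {z // z ∈ T}) {z : Z} (h : z ∈ T) :
    extPerm T σ z = (σ ⟨z, h⟩ : Z) :=
  σ.extendDomain_apply_subtype (Equiv.refl _) h

lemma extPerm_apply_notMem {Z : Type*} [DecidableEq Z] (T : Finset Z)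
    (σ : Equiv.Perm {z // z ∈ T}) {z : Z} (h : z ∉ T) :
    extPerm T σ z = z :=
  σ.extendDomain_apply_not_subtype (Equiv.refl _) h

lemma extPerm_mem {Z : Type*} [DecidableEq Z] (T : Finset Z)
    (σ : Equiv.Perm {z // z ∈ T}) (z : Z) :
    extPerm T σ z ∈ T ↔ z ∈ T := by
  by_cases h : z ∈ T
  · rw [extPerm_apply_mem T σ h]
    exact iff_of_true (σ ⟨z, h⟩).2 h
  · rw [extPerm_apply_notMem T σ h]

lemma hitFilter_ext {Z : Type*} [DecidableEq Z] (T : Finset Z)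
    (σ : Equiv.Perm {z // z ∈ T}) {m : ℕ} (x : Fin m → Z) :
    (Finset.univ.filter fun i => extPerm T σ (x i) ∈ T)
      = (Finset.univ.filter fun i => x i ∈ T) := by
  apply Finset.filter_congr
  intro i _
  simp [extPerm_mem]

lemma hitCount_ext {Z : Type*} [DecidableEq Z] (T : Finset Z)
    (σ : Equiv.Perm {z // z ∈ T}) {m : ℕ} (x : Fin m → Z) :
    hitCount T (fun i => extPerm T σ (x i)) = hitCount T x := by
  unfold hitCount
  rw [hitFilter_ext]

lemma sum_perm_apply {α : Type*} [Fintype α] [DecidableEq α] (f : α → ℝ) (t0 : α) :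
    (Fintype.card α : ℝ) * ∑ σ : Equiv.Perm α, f (σ t0) =
      (Fintype.card (Equiv.Perm α) : ℝ) * ∑ t, f t := by
  have hconst : ∀ t1 : α, ∑ σ : Equiv.Perm α, f (σ t1) = ∑ σ : Equiv.Perm α, f (σ t0) := by
    intro t1
    rw [← Equiv.sum_comp (Equiv.mulRight (Equiv.swap t0 t1)) (fun σ => f (σ t1))]
    apply Finset.sum_congr rfl
    intro σ _
    simp [Equiv.Perm.mul_apply, Equiv.swap_apply_right]
  calc (Fintype.card α : ℝ) * ∑ σ : Equiv.Perm α, f (σ t0)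
      = ∑ t1 : α, ∑ σ : Equiv.Perm α, f (σ t1) := by
        rw [Finset.sum_congr rfl (fun t1 _ => hconst t1)]
        simp [Finset.sum_const, nsmul_eq_mul, Finset.card_univ]
    _ = ∑ σ : Equiv.Perm α, ∑ t1, f (σ t1) := Finset.sum_comm
    _ = ∑ σ : Equiv.Perm α, ∑ t, f t := by
        apply Finset.sum_congr rfl
        intro σ _
        exact Equiv.sum_comp σ f
    _ = _ := by simp [Finset.sum_const, nsmul_eq_mul, Finset.card_univ]

lemma sum_perm_score {Z : Type*} [DecidableEq Z] (T : Finset Z) (hT : T.Nonempty)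
    (s : T → ℝ) (z : Z) :
    ∑ σ : Equiv.Perm {z // z ∈ T}, score T s (extPerm T σ z) =
      if z ∈ T then
        (Fintype.card (Equiv.Perm {z // z ∈ T}) : ℝ) * ((∑ t ∈ T.attach, s t) / (T.card : ℝ))
      else 0 := by
  by_cases h : z ∈ T
  · simp only [h, if_true]
    have hterm : ∀ σ : Equiv.Perm {z // z ∈ T},
        score T s (extPerm T σ z) = s (σ ⟨z, h⟩) := by
      intro σ
      rw [extPerm_apply_mem T σ h]
      have hm : ((σ ⟨z, h⟩ : {z // z ∈ T}) : Z) ∈ T := (σ ⟨z, h⟩).2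
      simp [score, hm]
    rw [Finset.sum_congr rfl (fun σ _ => hterm σ)]
    have hcard : (0 : ℝ) < (T.card : ℝ) := by
      exact_mod_cast Finset.card_pos.mpr hT
    have := sum_perm_apply (fun t : {z // z ∈ T} => s t) ⟨z, h⟩
    have hc : Fintype.card {z // z ∈ T} = T.card := Fintype.card_coe T
    have hatt : (∑ t : {z // z ∈ T}, s t) = ∑ t ∈ T.attach, s t := by
      rw [← Finset.univ_eq_attach]
    rw [hc, hatt] at this
    field_simp
    linarith [this]
  · simp only [h, if_false]
    apply Finset.sum_eq_zero
    intro σ _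
    rw [extPerm_apply_notMem T σ h]
    simp [score, h]

lemma sum_perm_batchAvg {Z : Type*} [DecidableEq Z] (T : Finset Z) (hT : T.Nonempty)
    (s : T → ℝ) {m : ℕ} (x : Fin m → Z) :
    ∑ σ : Equiv.Perm {z // z ∈ T}, batchAvg T s (fun i => extPerm T σ (x i)) =
      if 1 ≤ hitCount T x then
        (Fintype.card (Equiv.Perm {z // z ∈ T}) : ℝ) * ((∑ t ∈ T.attach, s t) / (T.card : ℝ))
      else 0 := by
  set c : ℝ := (Fintype.card (Equiv.Perm {z // z ∈ T}) : ℝ)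
      * ((∑ t ∈ T.attach, s t) / (T.card : ℝ)) with hc
  have step1 : ∑ σ : Equiv.Perm {z // z ∈ T}, batchAvg T s (fun i => extPerm T σ (x i))
      = (∑ i, ∑ σ : Equiv.Perm {z // z ∈ T}, score T s (extPerm T σ (x i)))
          / (hitCount T x : ℝ) := by
    calc ∑ σ : Equiv.Perm {z // z ∈ T}, batchAvg T s (fun i => extPerm T σ (x i))
        = ∑ σ : Equiv.Perm {z // z ∈ T},
            (∑ i, score T s (extPerm T σ (x i))) / (hitCount T x : ℝ) := by
          apply Finset.sum_congr rfl
          intro σ _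
          rw [batchAvg_eq, hitCount_ext]
      _ = (∑ σ : Equiv.Perm {z // z ∈ T}, ∑ i, score T s (extPerm T σ (x i)))
            / (hitCount T x : ℝ) := by rw [Finset.sum_div]
      _ = _ := by rw [Finset.sum_comm]
  rw [step1]
  have step2 : (∑ i, ∑ σ : Equiv.Perm {z // z ∈ T}, score T s (extPerm T σ (x i)))
      = (hitCount T x : ℝ) * c := by
    rw [Finset.sum_congr rfl (fun i _ => sum_perm_score T hT s (x i))]
    rw [Finset.sum_ite, Finset.sum_const, Finset.sum_const]
    simp only [smul_zero, add_zero, nsmul_eq_mul]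
    rfl
  rw [step2]
  by_cases h : 1 ≤ hitCount T x
  · have hne : (hitCount T x : ℝ) ≠ 0 := by exact_mod_cast Nat.one_le_iff_ne_zero.mp h
    rw [if_pos h, mul_comm, mul_div_assoc, div_self hne, mul_one]
  · have h0 : hitCount T x = 0 := by omega
    rw [if_neg h, h0]
    simp

/-- **Unbiased estimator theorem.** With `M_1, …, M_K` independent uniform
draws from `Z^m`, `K̄` the number of draws hitting `T` and
`â = (1/K̄) Σ_k avg(M_k^T)` (when `K̄ ≥ 1`), we have
`𝔼[â · 1{K̄ ≥ 1}] = ℙ(K̄ ≥ 1) · s_T`. -/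
theorem unbiased_estimator
    {Z : Type*} [Fintype Z] [DecidableEq Z] [Nonempty Z]
    (T : Finset Z) (hT : T.Nonempty) (s : T → ℝ) (m K : ℕ) (hm : 1 ≤ m) (hK : 1 ≤ K) :
    (∑ M : Fin K → Fin m → Z,
        (if 1 ≤ hitDraws T M then
          (∑ k, batchAvg T s (M k)) / (hitDraws T M : ℝ) else 0))
        / (Fintype.card (Fin K → Fin m → Z) : ℝ)
      = (((Finset.univ.filter fun M : Fin K → Fin m → Z => 1 ≤ hitDraws T M).card : ℝ)
            / (Fintype.card (Fin K → Fin m → Z) : ℝ))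
        * ((∑ t ∈ T.attach, s t) / (T.card : ℝ)) := by
  classical
  set sT : ℝ := (∑ t ∈ T.attach, s t) / (T.card : ℝ) with hsT
  set F : (Fin K → Fin m → Z) → ℝ := fun M =>
    if 1 ≤ hitDraws T M then (∑ k, batchAvg T s (M k)) / (hitDraws T M : ℝ) else 0 with hF
  have hGpos : (0 : ℝ) < (Fintype.card (Equiv.Perm {z // z ∈ T}) : ℝ) := by
    exact_mod_cast Fintype.card_pos
  -- invariance of hitDraws
  have hhd : ∀ (σ : Equiv.Perm {z // z ∈ T}) (M : Fin K → Fin m → Z),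
      hitDraws T (fun k i => extPerm T σ (M k i)) = hitDraws T M := by
    intro σ M
    unfold hitDraws
    apply congrArg Finset.card
    apply Finset.filter_congr
    intro k _
    rw [show (fun k i => extPerm T σ (M k i)) k = fun i => extPerm T σ (M k i) from rfl,
      hitCount_ext]
  have key : (Fintype.card (Equiv.Perm {z // z ∈ T}) : ℝ) * ∑ M, F M =
      (Fintype.card (Equiv.Perm {z // z ∈ T}) : ℝ) *
        (((Finset.univ.filter fun M : Fin K → Fin m → Z => 1 ≤ hitDraws T M).card : ℝ) * sT) := by
    calc (Fintype.card (Equiv.Perm {z // z ∈ T}) : ℝ) * ∑ M, F M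
        = ∑ _σ : Equiv.Perm {z // z ∈ T}, ∑ M, F M := by
          simp [Finset.sum_const, nsmul_eq_mul, Finset.card_univ]
      _ = ∑ σ : Equiv.Perm {z // z ∈ T}, ∑ M : Fin K → Fin m → Z, F (fun k i => extPerm T σ (M k i)) := by
          apply Finset.sum_congr rfl
          intro σ _
          have hbij : Function.Bijective
              (fun (M : Fin K → Fin m → Z) (k : Fin K) (i : Fin m) => extPerm T σ (M k i)) := by
            constructor
            · intro M M' h
              funext k i
              exact (extPerm T σ).injective (congrFun (congrFun h k) i)
            · intro N
              exact ⟨fun k i => (extPerm T σ).symm (N k i),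
                funext fun k => funext fun i => (extPerm T σ).apply_symm_apply _⟩
          exact (Fintype.sum_bijective _ hbij
            (fun M => F (fun k i => extPerm T σ (M k i))) F (fun M => rfl)).symm
      _ = ∑ M : Fin K → Fin m → Z, ∑ σ : Equiv.Perm {z // z ∈ T}, F (fun k i => extPerm T σ (M k i)) := by
          exact Finset.sum_comm
      _ = ∑ M : Fin K → Fin m → Z,
            (if 1 ≤ hitDraws T M then (Fintype.card (Equiv.Perm {z // z ∈ T}) : ℝ) * sT else 0) := by
          apply Finset.sum_congr rfl
          intro M _
          have hFσ : ∀ σ : Equiv.Perm {z // z ∈ T}, F (fun k i => extPerm T σ (M k i)) =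
              if 1 ≤ hitDraws T M then
                (∑ k, batchAvg T s (fun i => extPerm T σ (M k i))) / (hitDraws T M : ℝ)
              else 0 := by
            intro σ
            simp only [hF, hhd σ M]
          rw [Finset.sum_congr rfl (fun σ _ => hFσ σ)]
          by_cases h : 1 ≤ hitDraws T M
          · simp only [h, if_true]
            rw [← Finset.sum_div, Finset.sum_comm]
            rw [Finset.sum_congr rfl (fun k _ => sum_perm_batchAvg T hT s (M k))]
            rw [Finset.sum_ite, Finset.sum_const, Finset.sum_const]
            simp only [smul_zero, add_zero, nsmul_eq_mul]
            have : ((Finset.univ.filter fun k => 1 ≤ hitCount T (M k)).card : ℝ)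
                = (hitDraws T M : ℝ) := by unfold hitDraws; rfl
            rw [this]
            have hne : (hitDraws T M : ℝ) ≠ 0 := by
              exact_mod_cast Nat.one_le_iff_ne_zero.mp h
            have hTne : ((T.card : ℕ) : ℝ) ≠ 0 := by
              exact_mod_cast Finset.card_ne_zero_of_mem hT.choose_spec
            rw [hsT]
            field_simp
          · simp [h]
      _ = ((Finset.univ.filter fun M : Fin K → Fin m → Z => 1 ≤ hitDraws T M).card : ℝ)
            * ((Fintype.card (Equiv.Perm {z // z ∈ T}) : ℝ) * sT) := by
          rw [Finset.sum_ite, Finset.sum_const, Finset.sum_const]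
          simp [nsmul_eq_mul]
      _ = _ := by ring
  have hS : ∑ M, F M =
      ((Finset.univ.filter fun M : Fin K → Fin m → Z => 1 ≤ hitDraws T M).card : ℝ) * sT :=
    mul_left_cancel₀ (ne_of_gt hGpos) key
  rw [show (∑ M : Fin K → Fin m → Z,
        (if 1 ≤ hitDraws T M then
          (∑ k, batchAvg T s (M k)) / (hitDraws T M : ℝ) else 0)) = ∑ M, F M from rfl, hS]
  ring
end
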